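/- arXiv:2308.15810 — 4 statements merged into one kernel-verified Lean document; each statement's English description precedes it below -/
import Mathlib

section
/- Let λ and μ be Borel probability measures on S^m with λ absolutely continuous with respect to σ. Suppose K and L are convex bodies in ℝ^{m+1} with the origin in their interiors, each solving the Gauss image problem for (λ, μ). Then for every Borel set ω ⊆ S^m, λ( (𝒢_K(ρ⃗_K(ω))) Δ (𝒢_L(ρ⃗_L(ω))) ) = 0, where Δ denotes the symmetric difference of sets. -/
open MeasureTheory Metric Set Real
open scoped RealInnerProductSpace ENNReal NNReal symmDiff

noncomputable section

/-- Euclidean space `ℝ^{m+1}`. -/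
abbrev Euc (m : ℕ) : Type := EuclideanSpace ℝ (Fin (m + 1))

/-- The unit sphere `S^m ⊂ ℝ^{m+1}`. -/
abbrev Sph (m : ℕ) : Type := Metric.sphere (0 : Euc m) 1

variable {m : ℕ}

/-- The spherical (geodesic) distance `d(n,x) = arccos ⟨n,x⟩`. -/
def sphDist (n x : Sph m) : ℝ := Real.arccos ⟪(n : Euc m), (x : Euc m)⟫

/-- The uniform (rotation invariant) probability measure `σ` on the sphere. -/
def unifSph (m : ℕ) : Measure (Sph m) :=
  (((volume : Measure (Euc m)).toSphere Set.univ)⁻¹) • (volume : Measure (Euc m)).toSphere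

/-- The cost `c(n,x) = -log⟨n,x⟩` if `⟨n,x⟩ > 0`, `+∞` otherwise. -/
def sphCost (n x : Sph m) : ℝ≥0∞ :=
  if 0 < ⟪(n : Euc m), (x : Euc m)⟫ then
    ENNReal.ofReal (-Real.log ⟪(n : Euc m), (x : Euc m)⟫) else ∞

/-- The real-valued cost, meaningful on `{⟨n,x⟩ > 0}`. -/
def sphCostR (n x : Sph m) : ℝ := -Real.log ⟪(n : Euc m), (x : Euc m)⟫

/-- `F_β = {n : ∃ x ∈ F, ⟨n,x⟩ > cos β}`. -/
def sphExpand (F : Set (Sph m)) (β : ℝ) : Set (Sph m) :=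
  {n : Sph m | ∃ x ∈ F, Real.cos β < ⟪(n : Euc m), (x : Euc m)⟫}

/-- Weak Aleksandrov condition with constant `α`. -/
def WeakAleksandrov (lam mu : Measure (Sph m)) (α : ℝ) : Prop :=
  ∀ F : Set (Sph m), IsClosed F →
    (∃ u : Sph m, ∀ x ∈ F, 0 ≤ ⟪(x : Euc m), (u : Euc m)⟫) →
    mu F ≤ lam (sphExpand F (π / 2 - 2 * α))

/-- The support of a measure on a topological space: points all of whose
neighbourhoods have positive measure. -/
def msupport {X : Type*} [TopologicalSpace X] [MeasurableSpace X] (θ : Measure X) : Set X :=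
  {x | ∀ U ∈ nhds x, 0 < θ U}

/-- `supp μ` is not contained in any closed hemisphere. -/
def NotInClosedHemisphere (mu : Measure (Sph m)) : Prop :=
  ¬ ∃ u : Sph m, msupport mu ⊆ {x : Sph m | 0 ≤ ⟪(x : Euc m), (u : Euc m)⟫}

/-- Transport plans: probability measures on `S^m × S^m` with marginals `λ` and `μ`. -/
def IsCoupling (lam mu : Measure (Sph m)) (pl : Measure (Sph m × Sph m)) : Prop :=
  IsProbabilityMeasure pl ∧ pl.map Prod.fst = lam ∧ pl.map Prod.snd = mu

/-- Total transport cost of a plan. -/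
def transportCost (pl : Measure (Sph m × Sph m)) : ℝ≥0∞ :=
  ∫⁻ q, sphCost q.1 q.2 ∂pl

/-- A convex body: compact convex with `0` in the interior. -/
def IsConvexBody (K : Set (Euc m)) : Prop :=
  IsCompact K ∧ Convex ℝ K ∧ 0 ∈ interior K

/-- Radial function `ρ_K(x) = max {t > 0 : t • x ∈ K}`. -/
def radialFn (K : Set (Euc m)) (x : Sph m) : ℝ :=
  sSup {t : ℝ | 0 < t ∧ t • (x : Euc m) ∈ K}

/-- Support function `h_K(n) = max {⟨y,n⟩ : y ∈ K}`. -/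
def suppFn (K : Set (Euc m)) (n : Sph m) : ℝ :=
  sSup ((fun y => ⟪y, (n : Euc m)⟫) '' K)

/-- Gauss image `𝒢_K(ρ⃗_K(ω))`: unit vectors normal to `K` at some point
`ρ_K(x) • x`, `x ∈ ω`. -/
def gaussImage (K : Set (Euc m)) (ω : Set (Sph m)) : Set (Sph m) :=
  {n : Sph m | ∃ x ∈ ω, ∀ y ∈ K, ⟪y - radialFn K x • (x : Euc m), (n : Euc m)⟫ ≤ 0}

/-- `K` solves the Gauss image problem for `(λ, μ)`. -/
def SolvesGIP (K : Set (Euc m)) (lam mu : Measure (Sph m)) : Prop :=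
  ∀ ω : Set (Sph m), MeasurableSet ω → mu ω = lam (gaussImage K ω)

/-- Spherical diameter of a set. -/
def sphDiam (A : Set (Sph m)) : ℝ :=
  sSup {r : ℝ | ∃ x ∈ A, ∃ y ∈ A, r = sphDist x y}

/-- The cost as an extended real number. -/
def cE (n x : Sph m) : EReal := (sphCost n x : EReal)

/-- The `c`-transform `f^c(n) = inf_x (c(n,x) - f(x))`, in extended reals. -/
def ctrans (f : Sph m → EReal) (n : Sph m) : EReal := ⨅ x : Sph m, cE n x - f x

/-- A Kantorovitch potential: real-valued, Lipschitz, with `φ^{cc} = φ`. -/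
def IsKPotential (φ : Sph m → ℝ) : Prop :=
  (∃ L : ℝ≥0, LipschitzWith L φ) ∧
  ∀ n : Sph m, ctrans (ctrans (fun y : Sph m => (φ y : EReal))) n = (φ n : EReal)

/-- The `c`-subdifferential `∂_c φ`. -/
def csubdiff (φ : Sph m → ℝ) : Set (Sph m × Sph m) :=
  {q : Sph m × Sph m |
    (φ q.1 : EReal) + ctrans (fun y : Sph m => (φ y : EReal)) q.2 = cE q.1 q.2}

/-- A `κ`-chain from `x` to `y` inside `A ⊆ S^m` for the spherical distance. -/
def SphChainIn (A : Set (Sph m)) (κ : ℝ) (x y : Sph m) : Prop :=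
  ∃ (p : ℕ) (f : ℕ → Sph m), f 0 = x ∧ f p = y ∧ (∀ i ≤ p, f i ∈ A) ∧
    ∀ i < p, sphDist (f i) (f (i + 1)) < κ

/-- `C` is a `κ`-chain connected component of `A ⊆ S^m`. -/
def IsSphChainComponent (A : Set (Sph m)) (κ : ℝ) (C : Set (Sph m)) : Prop :=
  ∃ x ∈ A, C = {y : Sph m | SphChainIn A κ x y}

/-- A `c`-path in `Γ`: `f 0, …, f k ∈ Γ` with `d((f (i+1)).1, (f i).2) < π/2`. -/
def IsCPath (Γ : Set (Sph m × Sph m)) (k : ℕ) (f : ℕ → Sph m × Sph m) : Prop :=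
  (∀ i ≤ k, f i ∈ Γ) ∧ ∀ i < k, sphDist (f (i + 1)).1 (f i).2 < π / 2

/-- The cost of a `c`-path. -/
def cPathCost (k : ℕ) (f : ℕ → Sph m × Sph m) : ℝ :=
  ∑ i ∈ Finset.range k, (sphCostR (f (i + 1)).1 (f i).2 - sphCostR (f i).1 (f i).2)

/-- `c`-cyclically monotone subsets of `S^m × S^m`. -/
def CCyclMonotone (Γ : Set (Sph m × Sph m)) : Prop :=
  ∀ (k : ℕ) (f : ℕ → Sph m × Sph m), (∀ i < k, f i ∈ Γ) → f k = f 0 →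
    ∑ i ∈ Finset.range k, sphCost (f i).1 (f i).2 ≤
      ∑ i ∈ Finset.range k, sphCost (f (i + 1)).1 (f i).2

end

/-!
Where the support function `h_K` is differentiable at `n`, the normal `n` is attained at exactly
one boundary point of `K`, namely `∇h_K(n)`, whose direction we call `α_K(n)`. By Rademacher's
theorem this holds `λ`-a.e., so `𝒢_K(ρ⃗_K(ω))` agrees `λ`-a.e. with `α_K⁻¹(ω)`, and solving the
Gauss image problem says exactly that `α_K` pushes `λ` forward to `μ`.

To compare two solutions use `ρ_K(x)⟪x, n⟫ ≤ h_K(n)`, with equality iff `n` is normal to `K` at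
`ρ_K(x) x`. With `Φ = log h_K - log h_L` and `Ψ = log ρ_K - log ρ_L` it gives the sandwich
`Ψ ∘ α_L ≤ Φ ≤ Ψ ∘ α_K` `λ`-a.e. Both ends integrate to `∫ Ψ dμ`, so all three agree a.e., and the
equality case forces `α_L = α_K` a.e.
-/

open scoped Gradient Topology Pointwise

section SupportFunction

variable {E : Type*} [NormedAddCommGroup E] [InnerProductSpace ℝ E] {C : Set E} {v y : E}

noncomputable def supportFunction (C : Set E) (v : E) : ℝ := sSup ((fun y => ⟪y, v⟫) '' C)

lemma IsCompact.bddAbove_inner_image (hC : IsCompact C) (v : E) :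
    BddAbove ((fun y => ⟪y, v⟫) '' C) :=
  (hC.image (continuous_id.inner continuous_const)).bddAbove

lemma inner_le_supportFunction (hC : IsCompact C) (hy : y ∈ C) (v : E) :
    ⟪y, v⟫ ≤ supportFunction C v :=
  le_csSup (hC.bddAbove_inner_image v) ⟨y, hy, rfl⟩

lemma supportFunction_le_iff (hC : IsCompact C) (hne : C.Nonempty) {a : ℝ} :
    supportFunction C v ≤ a ↔ ∀ y ∈ C, ⟪y, v⟫ ≤ a := by
  rw [supportFunction, csSup_le_iff (hC.bddAbove_inner_image v) (hne.image _),
    forall_mem_image]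

lemma supportFunction_eq_of_isMaxOn (hC : IsCompact C) (hy : y ∈ C)
    (hmax : IsMaxOn (⟪·, v⟫) C y) : supportFunction C v = ⟪y, v⟫ :=
  le_antisymm ((supportFunction_le_iff hC ⟨y, hy⟩).2 hmax) (inner_le_supportFunction hC hy v)

lemma IsCompact.exists_isMaxOn_inner (hC : IsCompact C) (hne : C.Nonempty) (v : E) :
    ∃ y ∈ C, IsMaxOn (⟪·, v⟫) C y :=
  hC.exists_isMaxOn hne (continuous_id.inner continuous_const).continuousOn

lemma supportFunction_smul {c : ℝ} (hc : 0 ≤ c) (C : Set E) (v : E) :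
    supportFunction C (c • v) = c * supportFunction C v := by
  have : (fun y => ⟪y, c • v⟫) '' C = c • (fun y => ⟪y, v⟫) '' C := by
    rw [← image_smul, image_image]
    simp only [real_inner_smul_right, smul_eq_mul]
  rw [supportFunction, this, Real.sSup_smul_of_nonneg hc, smul_eq_mul, supportFunction]

lemma supportFunction_pos (hC : IsCompact C) (h0 : C ∈ 𝓝 0) (hv : v ≠ 0) :
    0 < supportFunction C v := by
  have hcont : Continuous fun t : ℝ => t • v := by fun_prop
  have hsmul : ∀ᶠ t : ℝ in 𝓝[>] 0, t • v ∈ C :=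
    nhdsWithin_le_nhds <| hcont.tendsto' 0 0 (zero_smul ℝ v) h0
  obtain ⟨t, htC, ht⟩ := (hsmul.and self_mem_nhdsWithin).exists
  calc 0 < t * ‖v‖ ^ 2 := by positivity
    _ = ⟪t • v, v⟫ := by rw [real_inner_smul_left, real_inner_self_eq_norm_sq]
    _ ≤ supportFunction C v := inner_le_supportFunction hC htC v

lemma lipschitzWith_supportFunction (hC : IsCompact C) (hne : C.Nonempty) :
    ∃ K, LipschitzWith K (supportFunction C) := by
  obtain ⟨R, hR⟩ := hC.isBounded.exists_norm_le
  refine ⟨R.toNNReal, LipschitzWith.of_le_add_mul _ fun v w => ?_⟩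
  refine (supportFunction_le_iff hC hne).2 fun y hy => ?_
  calc ⟪y, v⟫ = ⟪y, w⟫ + ⟪y, v - w⟫ := by rw [← inner_add_right, add_sub_cancel]
    _ ≤ supportFunction C w + R.toNNReal * dist v w := by
      gcongr
      · exact inner_le_supportFunction hC hy w
      · calc ⟪y, v - w⟫ ≤ ‖y‖ * ‖v - w‖ := real_inner_le_norm y _
          _ ≤ R.toNNReal * dist v w := by
            rw [dist_eq_norm, Real.coe_toNNReal']
            gcongr
            exact (hR y hy).trans (le_max_left _ _)

lemma differentiableAt_supportFunction_of_smul {c : ℝ} (hc : 0 < c)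
    (h : DifferentiableAt ℝ (supportFunction C) (c • v)) :
    DifferentiableAt ℝ (supportFunction C) v := by
  have : supportFunction C = fun w => c⁻¹ * supportFunction C (c • w) := by
    ext w
    rw [supportFunction_smul hc.le, inv_mul_cancel_left₀ hc.ne']
  rw [this]
  exact (h.comp v (differentiableAt_id.const_smul c)).const_mul c⁻¹

/-- `supportFunction C - ⟪y, ·⟫` is nonnegative and vanishes at `v`, so its derivative there is
zero. -/
lemma gradient_supportFunction_eq [CompleteSpace E] (hC : IsCompact C)
    (hd : DifferentiableAt ℝ (supportFunction C) v) (hy : y ∈ C) (hmax : IsMaxOn (⟪·, v⟫) C y) :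
    ∇ (supportFunction C) v = y := by
  have hmin : IsLocalMin (fun u => supportFunction C u - ⟪y, u⟫) v := by
    refine IsMinOn.isLocalMin (fun u _ => ?_) Filter.univ_mem
    simp only [supportFunction_eq_of_isMaxOn hC hy hmax, sub_self, sub_nonneg]
    exact inner_le_supportFunction hC hy u
  have hzero := hmin.hasFDerivAt_eq_zero (hd.hasFDerivAt.sub (innerSL ℝ y).hasFDerivAt)
  rw [sub_eq_zero] at hzero
  exact (hasGradientAt_iff_hasFDerivAt.2 (hzero ▸ hd.hasFDerivAt)).gradient

end SupportFunction

lemma MeasureTheory.Measure.toSphere_preimage_eq_zero {E : Type*} [NormedAddCommGroup E]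
    [NormedSpace ℝ E] [MeasurableSpace E] [BorelSpace E] {μ : Measure E} {S : Set E}
    (hS : MeasurableSet S) (hcone : ∀ v ∈ S, ∀ c : ℝ, 0 < c → c • v ∈ S) (hμS : μ S = 0) :
    μ.toSphere (Subtype.val ⁻¹' S) = 0 := by
  rw [Measure.toSphere_apply' _ (measurable_subtype_coe hS)]
  refine mul_eq_zero_of_right _ (measure_mono_null ?_ hμS)
  rintro _ ⟨c, hc, _, ⟨x, hx, rfl⟩, rfl⟩
  exact hcone _ hx c hc.1

section ConvexBody

variable {m : ℕ} {K : Set (Euc m)}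

lemma IsConvexBody.nonempty (hK : IsConvexBody K) : K.Nonempty :=
  ⟨0, interior_subset hK.2.2⟩

lemma IsConvexBody.mem_nhds_zero (hK : IsConvexBody K) : K ∈ 𝓝 0 :=
  mem_interior_iff_mem_nhds.1 hK.2.2

lemma IsConvexBody.gauge_le_one_iff (hK : IsConvexBody K) {y : Euc m} :
    gauge K y ≤ 1 ↔ y ∈ K := by
  rw [gauge_le_one_iff_mem_closure hK.2.1 hK.mem_nhds_zero, hK.1.isClosed.closure_eq]

lemma IsConvexBody.gauge_pos (hK : IsConvexBody K) {y : Euc m} (hy : y ≠ 0) : 0 < gauge K y :=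
  (_root_.gauge_pos (absorbent_nhds_zero hK.mem_nhds_zero)
    (NormedSpace.isVonNBounded_of_isBounded ℝ hK.1.isBounded)).2 hy

lemma radialFn_eq_inv_gauge (hK : IsConvexBody K) (x : Sph m) :
    radialFn K x = (gauge K (x : Euc m))⁻¹ := by
  have hg := hK.gauge_pos (ne_zero_of_mem_unit_sphere x)
  have : {t : ℝ | 0 < t ∧ t • (x : Euc m) ∈ K} = Ioc 0 (gauge K (x : Euc m))⁻¹ := by
    ext t
    refine and_congr_right fun ht => ?_
    rw [← hK.gauge_le_one_iff, gauge_smul_of_nonneg ht.le, smul_eq_mul, inv_eq_one_div,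
      le_div_iff₀ hg]
  rw [radialFn, this, csSup_Ioc (inv_pos.2 hg)]

lemma radialFn_pos (hK : IsConvexBody K) (x : Sph m) : 0 < radialFn K x := by
  rw [radialFn_eq_inv_gauge hK]
  exact inv_pos.2 (hK.gauge_pos (ne_zero_of_mem_unit_sphere x))

lemma smul_mem_iff_le_radialFn (hK : IsConvexBody K) (x : Sph m) {t : ℝ} (ht : 0 ≤ t) :
    t • (x : Euc m) ∈ K ↔ t ≤ radialFn K x := by
  rw [← hK.gauge_le_one_iff, gauge_smul_of_nonneg ht, smul_eq_mul, radialFn_eq_inv_gauge hK,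
    inv_eq_one_div, le_div_iff₀ (hK.gauge_pos (ne_zero_of_mem_unit_sphere x))]

lemma radialFn_smul_mem (hK : IsConvexBody K) (x : Sph m) : radialFn K x • (x : Euc m) ∈ K :=
  (smul_mem_iff_le_radialFn hK x (radialFn_pos hK x).le).2 le_rfl

lemma continuous_radialFn (hK : IsConvexBody K) : Continuous (radialFn K) := by
  simp_rw [funext (radialFn_eq_inv_gauge hK)]
  exact ((continuous_gauge hK.2.1 hK.mem_nhds_zero).comp continuous_subtype_val).inv₀
    fun x => (hK.gauge_pos (ne_zero_of_mem_unit_sphere x)).ne'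

end ConvexBody

section ReverseGaussMap

variable {m : ℕ} {K : Set (Euc m)} {n : Sph m}

/-- The map `α_K` sending `n` to the direction `x` with `n` normal to `K` at `ρ_K(x) x`: where
`h_K` is differentiable, `∇h_K(n)` is that boundary point. Where the gradient vanishes (only at
points of non-differentiability) the value `n` is a placeholder. -/
noncomputable def reverseGaussMap (K : Set (Euc m)) (n : Sph m) : Sph m :=
  ⟨if ∇ (supportFunction K) (n : Euc m) = 0 then (n : Euc m)
    else ‖∇ (supportFunction K) (n : Euc m)‖⁻¹ • ∇ (supportFunction K) (n : Euc m), by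
    split_ifs with h
    · exact n.2
    · simp [norm_smul, h]⟩

lemma measurable_reverseGaussMap (K : Set (Euc m)) : Measurable (reverseGaussMap K) := by
  have hg : Measurable fun n : Sph m => ∇ (supportFunction K) (n : Euc m) :=
    (InnerProductSpace.toDual ℝ (Euc m)).symm.continuous.measurable.comp
      ((measurable_fderiv ℝ (supportFunction K)).comp measurable_subtype_coe)
  exact (Measurable.ite (hg (measurableSet_singleton 0)) measurable_subtype_coe
    (hg.norm.inv.smul hg)).subtype_mk

lemma reverseGaussMap_eq_of_gradient_eq {x : Sph m} {t : ℝ} (ht : 0 < t)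
    (hg : ∇ (supportFunction K) (n : Euc m) = t • (x : Euc m)) : reverseGaussMap K n = x := by
  have hx : ‖(x : Euc m)‖ = 1 := norm_eq_of_mem_sphere x
  refine Subtype.ext ?_
  simp only [reverseGaussMap, hg, smul_eq_zero, ht.ne', ne_zero_of_mem_unit_sphere x, or_self,
    if_false, norm_smul, hx, Real.norm_eq_abs, abs_of_pos ht, mul_one, smul_smul,
    inv_mul_cancel₀ ht.ne', one_smul]

lemma radialFn_mul_inner_le_supportFunction (hK : IsConvexBody K) (x n : Sph m) :
    radialFn K x * ⟪(x : Euc m), (n : Euc m)⟫ ≤ supportFunction K n := by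
  rw [← real_inner_smul_left]
  exact inner_le_supportFunction hK.1 (radialFn_smul_mem hK x) n

lemma isMaxOn_iff_supportFunction_eq (hK : IsConvexBody K) (x : Sph m) :
    IsMaxOn (⟪·, (n : Euc m)⟫) K (radialFn K x • (x : Euc m)) ↔
      supportFunction K n = radialFn K x * ⟪(x : Euc m), (n : Euc m)⟫ := by
  rw [← real_inner_smul_left]
  refine ⟨supportFunction_eq_of_isMaxOn hK.1 (radialFn_smul_mem hK x), fun h => ?_⟩
  exact isMaxOn_iff.2 fun y hy => h ▸ inner_le_supportFunction hK.1 hy n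

/-- The maximizer `y` of `⟪·, n⟫` over `K` is the boundary point `ρ_K(x) x` of its direction `x`,
since `‖y‖ ≤ ρ_K(x)` and `⟪x, n⟫ > 0`. -/
lemma exists_isMaxOn_radialFn_smul (hK : IsConvexBody K) (n : Sph m) :
    ∃ x : Sph m, IsMaxOn (⟪·, (n : Euc m)⟫) K (radialFn K x • (x : Euc m)) := by
  obtain ⟨y, hyK, hmax⟩ := hK.1.exists_isMaxOn_inner hK.nonempty n
  have hpos : 0 < ⟪y, (n : Euc m)⟫ := supportFunction_eq_of_isMaxOn hK.1 hyK hmax ▸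
    supportFunction_pos hK.1 hK.mem_nhds_zero (ne_zero_of_mem_unit_sphere n)
  have hy : 0 < ‖y‖ := norm_pos_iff.2 (by rintro rfl; simp at hpos)
  let x : Sph m := ⟨‖y‖⁻¹ • y, by simp [norm_smul, hy.ne']⟩
  have hyx : y = ‖y‖ • (x : Euc m) := by simp [x, smul_smul, hy.ne']
  have hxn : 0 < ⟪(x : Euc m), (n : Euc m)⟫ := by
    simp only [x, real_inner_smul_left]
    positivity
  have hle : ‖y‖ ≤ radialFn K x := (smul_mem_iff_le_radialFn hK x hy.le).1 (hyx ▸ hyK)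
  refine ⟨x, isMaxOn_iff.2 fun z hz => (isMaxOn_iff.1 hmax z hz).trans ?_⟩
  calc ⟪y, (n : Euc m)⟫ = ‖y‖ * ⟪(x : Euc m), (n : Euc m)⟫ := by
        conv_lhs => rw [hyx, real_inner_smul_left]
    _ ≤ radialFn K x * ⟪(x : Euc m), (n : Euc m)⟫ := by gcongr
    _ = ⟪radialFn K x • (x : Euc m), (n : Euc m)⟫ := (real_inner_smul_left _ _ _).symm

lemma isMaxOn_iff_eq_reverseGaussMap (hK : IsConvexBody K)
    (hd : DifferentiableAt ℝ (supportFunction K) (n : Euc m)) (x : Sph m) :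
    IsMaxOn (⟪·, (n : Euc m)⟫) K (radialFn K x • (x : Euc m)) ↔ x = reverseGaussMap K n := by
  have key : ∀ x : Sph m, IsMaxOn (⟪·, (n : Euc m)⟫) K (radialFn K x • (x : Euc m)) →
      x = reverseGaussMap K n := fun x hx =>
    (reverseGaussMap_eq_of_gradient_eq (radialFn_pos hK x)
      (gradient_supportFunction_eq hK.1 hd (radialFn_smul_mem hK x) hx)).symm
  refine ⟨key x, ?_⟩
  rintro rfl
  obtain ⟨x₀, hx₀⟩ := exists_isMaxOn_radialFn_smul hK n
  exact key x₀ hx₀ ▸ hx₀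

lemma supportFunction_eq_of_differentiableAt (hK : IsConvexBody K)
    (hd : DifferentiableAt ℝ (supportFunction K) (n : Euc m)) :
    supportFunction K n =
      radialFn K (reverseGaussMap K n) * ⟪(reverseGaussMap K n : Euc m), (n : Euc m)⟫ :=
  (isMaxOn_iff_supportFunction_eq hK _).1 ((isMaxOn_iff_eq_reverseGaussMap hK hd _).2 rfl)

lemma inner_reverseGaussMap_pos (hK : IsConvexBody K)
    (hd : DifferentiableAt ℝ (supportFunction K) (n : Euc m)) :
    0 < ⟪(reverseGaussMap K n : Euc m), (n : Euc m)⟫ :=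
  pos_of_mul_pos_right (supportFunction_eq_of_differentiableAt hK hd ▸
    supportFunction_pos hK.1 hK.mem_nhds_zero (ne_zero_of_mem_unit_sphere n))
    (radialFn_pos hK _).le

lemma mem_gaussImage_iff (hK : IsConvexBody K)
    (hd : DifferentiableAt ℝ (supportFunction K) (n : Euc m)) {ω : Set (Sph m)} :
    n ∈ gaussImage K ω ↔ reverseGaussMap K n ∈ ω := by
  have hnormal : ∀ x : Sph m, (∀ y ∈ K, ⟪y - radialFn K x • (x : Euc m), (n : Euc m)⟫ ≤ 0) ↔
      x = reverseGaussMap K n := fun x => by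
    simp only [inner_sub_left, sub_nonpos]
    exact isMaxOn_iff_eq_reverseGaussMap hK hd x
  simp only [gaussImage, mem_ofPred_eq, hnormal, exists_eq_right]

end ReverseGaussMap

section GaussImageProblem

variable {m : ℕ} {K L : Set (Euc m)} {lam mu : Measure (Sph m)}

/-- Rademacher's theorem for the Lipschitz function `h_K`, transported to the sphere by its
positive homogeneity. -/
lemma ae_differentiableAt_supportFunction (hac : lam ≪ unifSph m) (hK : IsConvexBody K) :
    ∀ᵐ n : Sph m ∂lam, DifferentiableAt ℝ (supportFunction K) (n : Euc m) := by
  obtain ⟨c, hc⟩ := lipschitzWith_supportFunction hK.1 hK.nonempty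
  refine ae_iff.2 (hac ?_)
  rw [unifSph, Measure.smul_apply]
  refine smul_eq_zero_of_right _ (Measure.toSphere_preimage_eq_zero
    (S := {v | ¬DifferentiableAt ℝ (supportFunction K) v})
    (measurableSet_of_differentiableAt ℝ _).compl (fun v hv c hc hd => hv ?_)
    (ae_iff.1 hc.ae_differentiableAt))
  exact differentiableAt_supportFunction_of_smul hc hd

lemma map_reverseGaussMap (hK : IsConvexBody K)
    (hd : ∀ᵐ n : Sph m ∂lam, DifferentiableAt ℝ (supportFunction K) (n : Euc m))
    (hsol : SolvesGIP K lam mu) : lam.map (reverseGaussMap K) = mu := by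
  ext ω hω
  rw [Measure.map_apply (measurable_reverseGaussMap K) hω, hsol ω hω]
  refine measure_congr (Filter.eventuallyEq_set.2 ?_)
  filter_upwards [hd] with n hn
  exact (mem_gaussImage_iff hK hn).symm

/-- With `x = α_L(n)` we have `h_L(n) = ρ_L(x) ⟪x, n⟫`, so this gap is
`log h_K(n) - log (ρ_K(x) ⟪x, n⟫) ≥ 0`. -/
lemma log_ratio_gap_eq (hK : IsConvexBody K) (hL : IsConvexBody L) {n : Sph m}
    (hdL : DifferentiableAt ℝ (supportFunction L) (n : Euc m)) :
    (log (supportFunction K n) - log (supportFunction L n)) -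
        (log (radialFn K (reverseGaussMap L n)) - log (radialFn L (reverseGaussMap L n))) =
      log (supportFunction K n) -
        log (radialFn K (reverseGaussMap L n) * ⟪(reverseGaussMap L n : Euc m), (n : Euc m)⟫) := by
  have hxn := inner_reverseGaussMap_pos hL hdL
  rw [supportFunction_eq_of_differentiableAt hL hdL, log_mul (radialFn_pos hL _).ne' hxn.ne',
    log_mul (radialFn_pos hK _).ne' hxn.ne']
  ring

lemma log_radialFn_sub_le (hK : IsConvexBody K) (hL : IsConvexBody L) {n : Sph m}
    (hdL : DifferentiableAt ℝ (supportFunction L) (n : Euc m)) :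
    log (radialFn K (reverseGaussMap L n)) - log (radialFn L (reverseGaussMap L n)) ≤
      log (supportFunction K n) - log (supportFunction L n) := by
  rw [← sub_nonneg, log_ratio_gap_eq hK hL hdL, sub_nonneg]
  exact log_le_log (mul_pos (radialFn_pos hK _) (inner_reverseGaussMap_pos hL hdL))
    (radialFn_mul_inner_le_supportFunction hK _ n)

lemma reverseGaussMap_eq_of_log_le (hK : IsConvexBody K) (hL : IsConvexBody L) {n : Sph m}
    (hdK : DifferentiableAt ℝ (supportFunction K) (n : Euc m))
    (hdL : DifferentiableAt ℝ (supportFunction L) (n : Euc m))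
    (hle : log (supportFunction K n) - log (supportFunction L n) ≤
      log (radialFn K (reverseGaussMap L n)) - log (radialFn L (reverseGaussMap L n))) :
    reverseGaussMap L n = reverseGaussMap K n := by
  rw [← sub_nonpos, log_ratio_gap_eq hK hL hdL, sub_nonpos,
    log_le_log_iff (supportFunction_pos hK.1 hK.mem_nhds_zero (ne_zero_of_mem_unit_sphere n))
      (mul_pos (radialFn_pos hK _) (inner_reverseGaussMap_pos hL hdL))] at hle
  rw [← isMaxOn_iff_eq_reverseGaussMap hK hdK, isMaxOn_iff_supportFunction_eq hK]
  exact hle.antisymm (radialFn_mul_inner_le_supportFunction hK _ n)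

lemma integrable_comp_reverseGaussMap [IsFiniteMeasure mu]
    (hmap : lam.map (reverseGaussMap K) = mu) {f : Sph m → ℝ} (hf : Continuous f) :
    Integrable (f ∘ reverseGaussMap K) lam := by
  refine (integrable_map_measure hf.aestronglyMeasurable
    (measurable_reverseGaussMap K).aemeasurable).1 ?_
  rw [hmap]
  exact hf.integrable_of_hasCompactSupport (.of_compactSpace f)

lemma integral_comp_reverseGaussMap (hmap : lam.map (reverseGaussMap K) = mu) {f : Sph m → ℝ}
    (hf : Continuous f) : ∫ n, f (reverseGaussMap K n) ∂lam = ∫ x, f x ∂mu := by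
  rw [← hmap, integral_map (measurable_reverseGaussMap K).aemeasurable hf.aestronglyMeasurable]

end GaussImageProblem

theorem stmt_1_general (m : ℕ) (lam mu : Measure (Sph m))
    [IsProbabilityMeasure mu]
    (hac : lam ≪ unifSph m)
    (K L : Set (Euc m)) (hK : IsConvexBody K) (hL : IsConvexBody L)
    (hKs : SolvesGIP K lam mu) (hLs : SolvesGIP L lam mu) :
    ∀ ω : Set (Sph m), MeasurableSet ω →
      lam (gaussImage K ω ∆ gaussImage L ω) = 0 := by
  intro ω _
  have hdK := ae_differentiableAt_supportFunction hac hK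
  have hdL := ae_differentiableAt_supportFunction hac hL
  have hmapK := map_reverseGaussMap hK hdK hKs
  have hmapL := map_reverseGaussMap hL hdL hLs
  set Φ : Sph m → ℝ := fun n => log (supportFunction K n) - log (supportFunction L n)
  set Ψ : Sph m → ℝ := fun x => log (radialFn K x) - log (radialFn L x)
  have hΨ : Continuous Ψ :=
    ((continuous_radialFn hK).log fun x => (radialFn_pos hK x).ne').sub
      ((continuous_radialFn hL).log fun x => (radialFn_pos hL x).ne')
  have hlow : Ψ ∘ reverseGaussMap L ≤ᵐ[lam] Φ := by
    filter_upwards [hdL] with n hn using log_radialFn_sub_le hK hL hn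
  have hupp : Φ ≤ᵐ[lam] Ψ ∘ reverseGaussMap K := by
    filter_upwards [hdK] with n hn
    have := log_radialFn_sub_le hL hK hn
    simp only [Φ, Ψ, Function.comp_apply]
    linarith
  have hsame : Ψ ∘ reverseGaussMap L =ᵐ[lam] Ψ ∘ reverseGaussMap K :=
    (integral_eq_iff_of_ae_le (integrable_comp_reverseGaussMap hmapL hΨ)
      (integrable_comp_reverseGaussMap hmapK hΨ) (hlow.trans hupp)).1
      ((integral_comp_reverseGaussMap hmapL hΨ).trans (integral_comp_reverseGaussMap hmapK hΨ).symm)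
  refine measure_symmDiff_eq_zero_iff.2 (Filter.eventuallyEq_set.2 ?_)
  filter_upwards [hdK, hdL, hupp, hsame] with n hnK hnL hΦ hΨn
  rw [mem_gaussImage_iff hK hnK, mem_gaussImage_iff hL hnL,
    reverseGaussMap_eq_of_log_le hK hL hnK hnL (hΦ.trans_eq hΨn.symm)]

/-- Theorem 1.5, uniqueness part: two solutions of the Gauss
image problem have `λ`-a.e. equal Gauss images. -/
theorem stmt_1 (m : ℕ) (lam mu : Measure (Sph m))
    [IsProbabilityMeasure lam] [IsProbabilityMeasure mu]
    (hac : lam ≪ unifSph m)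
    (K L : Set (Euc m)) (hK : IsConvexBody K) (hL : IsConvexBody L)
    (hKs : SolvesGIP K lam mu) (hLs : SolvesGIP L lam mu) :
    ∀ ω : Set (Sph m), MeasurableSet ω →
      lam (gaussImage K ω ∆ gaussImage L ω) = 0 :=
  stmt_1_general m lam mu hac K L hK hL hKs hLs
end

section
/- Let λ and μ be Borel probability measures on S^m satisfying the weak Aleksandrov condition with constant α ∈ (0, π/2), with λ absolutely continuous with respect to σ and the support of μ not contained in any closed hemisphere. Let π_o, π^α ∈ Γ(λ,μ) with π_o a minimizer of π ↦ ∫ c dπ over Γ(λ,μ) and supp(π^α) ⊆ {(n,x) : ⟨n,x⟩ ≥ cos(π/2 − α)}. Let (P_i)_{1≤i≤l} and (Q_j)_{1≤j≤p} be finite families of pairwise disjoint Borel subsets of S^m with nonempty interiors such that λ(∪_i P_i) = 1 = μ(∪_j Q_j), λ(P_i) > 0 and μ(Q_j) > 0 for all i,j, λ(∂P_i) = μ(∂Q_j) = 0, and the spherical diameters of all P_i and Q_j are less than α/8; fix points z_i ∈ int(P_i) ∩ supp(λ) and w_j ∈ int(Q_j) ∩ supp(μ). Let 𝔊 = {(i,j)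 : π_o(P_i × Q_j) > 0}, with an oriented edge from (i,j) ∈ 𝔊 to (u,v) ∈ 𝔊 whenever d(z_u, w_j) < π/2 − α/4 (edge set 𝔈'). Let C be an (α/4)-chain connected component of supp(μ) and 𝔊_C = {(i,j) ∈ 𝔊 : Q_j ∩ C ≠ ∅}. Then any two vertices of 𝔊_C can be joined by a path of edges of 𝔈' passing through vertices of 𝔊, and the path can be chosen of length at most the cardinality of 𝔊. -/
open MeasureTheory Metric Set Real
open scoped RealInnerProductSpace ENNReal NNReal symmDiff

/-!
Let `S` be the set of columns `j` such that some cell `(i, j)` can be reached from `v`, and let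
`I` be the set of rows joined to a column of `S` by an edge. By construction the `po`-cells in
the rows of `I` lie in the columns of `S`. Since `pa` moves mass by at most `π/2 - α` and the
cells have diameter `< α/8`, the `pa`-cells in the columns of `S` lie in the rows of `I`. The two
plans have the same cell marginals, so comparing their masses on `I × S` gives the two converse
statements: `pa` keeps the rows of `I` inside the columns of `S`, and `po` keeps the columns of
`S` inside the rows of `I`. By the first, `S` contains every column carrying `μ`-mass within
`5α/8` of the centre of a column of `S`; an `α/4`-chain in `supp μ` from `Q v.2` to `Q v'.2`
thus puts `v'.2` into `S`. The second then gives an edge into `v'`, and removing loops bounds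
the length of the path by `#𝔊`.
-/

open InnerProductGeometry

variable {m : ℕ}

lemma sphDist_eq_angle (a b : Sph m) : sphDist a b = angle (a : Euc m) (b : Euc m) := by
  simp [sphDist, angle, norm_eq_of_mem_sphere]

lemma sphDist_comm (a b : Sph m) : sphDist a b = sphDist b a := by
  simp only [sphDist_eq_angle, angle_comm]

lemma sphDist_self (a : Sph m) : sphDist a a = 0 := by
  rw [sphDist_eq_angle, angle_self (ne_zero_of_mem_unit_sphere a)]

lemma sphDist_triangle (a b c : Sph m) : sphDist a c ≤ sphDist a b + sphDist b c := by
  simp only [sphDist_eq_angle, angle_le_angle_add_angle]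

lemma sphDist_le_of_cos_le_inner {a b : Sph m} {r : ℝ} (hr₀ : 0 ≤ r) (hrπ : r ≤ π)
    (h : cos r ≤ ⟪(a : Euc m), (b : Euc m)⟫) : sphDist a b ≤ r := by
  simpa only [sphDist, arccos_cos hr₀ hrπ] using arccos_le_arccos h

lemma isOpen_setOf_sphDist_lt (y : Sph m) (r : ℝ) : IsOpen {x : Sph m | sphDist y x < r} :=
  isOpen_lt (continuous_arccos.comp (continuous_const.inner continuous_subtype_val))
    continuous_const

lemma sphDist_le_sphDiam {A : Set (Sph m)} {x y : Sph m} (hx : x ∈ A) (hy : y ∈ A) :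
    sphDist x y ≤ sphDiam A :=
  le_csSup ⟨π, by rintro r ⟨a, -, b, -, rfl⟩; exact arccos_le_pi _⟩ ⟨x, hx, y, hy, rfl⟩

lemma msupport_eq_support {X : Type*} [TopologicalSpace X] [MeasurableSpace X]
    (θ : Measure X) : msupport θ = θ.support := by
  ext x
  exact (Measure.mem_support_iff_forall x).symm

lemma SphChainIn.mem_iff {A N : Set (Sph m)} {κ : ℝ}
    (hN : ∀ a b, a ∈ N → b ∈ A → sphDist a b < κ → b ∈ N) {x y : Sph m}
    (h : SphChainIn A κ x y) : x ∈ N ↔ y ∈ N := by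
  obtain ⟨k, f, rfl, rfl, hA, hstep⟩ := h
  suffices ∀ t ≤ k, (f 0 ∈ N ↔ f t ∈ N) from this k le_rfl
  intro t
  induction t with
  | zero => simp
  | succ t ih =>
    intro ht
    rw [ih (by omega)]
    have hd := hstep t (by omega)
    exact ⟨fun h ↦ hN _ _ h (hA _ ht) hd,
      fun h ↦ hN _ _ h (hA _ (by omega)) (by rwa [sphDist_comm])⟩

lemma single_le_sum_sum_of_nonneg {ι κ : Type*} {A : ι → κ → ℝ} (hA : ∀ i j, 0 ≤ A i j)
    {I : Finset ι} {S : Finset κ} {i : ι} {j : κ} (hi : i ∈ I) (hj : j ∈ S) :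
    A i j ≤ ∑ i ∈ I, ∑ j ∈ S, A i j :=
  (Finset.single_le_sum (fun j _ ↦ hA i j) hj).trans
    (Finset.single_le_sum (f := fun i ↦ ∑ j ∈ S, A i j)
      (fun i _ ↦ Finset.sum_nonneg fun j _ ↦ hA i j) hi)

section Margins

variable {ι κ : Type*} [Fintype ι] [Fintype κ]

theorem closed_of_eq_margins {A B : ι → κ → ℝ} (hA : ∀ i j, 0 ≤ A i j) (hB : ∀ i j, 0 ≤ B i j)
    (hrow : ∀ i, ∑ j, A i j = ∑ j, B i j) (hcol : ∀ j, ∑ i, A i j = ∑ i, B i j)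
    {I : Set ι} {S : Set κ} (hAI : ∀ i ∈ I, ∀ j, 0 < A i j → j ∈ S)
    (hBS : ∀ j ∈ S, ∀ i, 0 < B i j → i ∈ I) :
    (∀ i ∈ I, ∀ j, 0 < B i j → j ∈ S) ∧ (∀ j ∈ S, ∀ i, 0 < A i j → i ∈ I) := by
  classical
  set I' := Finset.univ.filter (· ∈ I)
  set S' := Finset.univ.filter (· ∈ S)
  have hA0 : ∀ i ∈ I', ∀ j ∈ S'ᶜ, A i j = 0 := fun i hi j hj ↦ by
    simp only [I', S', Finset.mem_compl, Finset.mem_filter, Finset.mem_univ, true_and] at hi hj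
    exact ((hA i j).eq_or_lt.resolve_right fun h ↦ hj (hAI i hi j h)).symm
  have hB0 : ∀ j ∈ S', ∀ i ∈ I'ᶜ, B i j = 0 := fun j hj i hi ↦ by
    simp only [I', S', Finset.mem_compl, Finset.mem_filter, Finset.mem_univ, true_and] at hi hj
    exact ((hB i j).eq_or_lt.resolve_right fun h ↦ hi (hBS j hj i h)).symm
  have hrowI : ∑ i ∈ I', ∑ j ∈ S', A i j =
      ∑ i ∈ I', ∑ j ∈ S', B i j + ∑ i ∈ I', ∑ j ∈ S'ᶜ, B i j := by
    rw [← Finset.sum_add_distrib]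
    refine Finset.sum_congr rfl fun i hi ↦ ?_
    rw [Finset.sum_add_sum_compl, ← hrow, ← Finset.sum_add_sum_compl S',
      Finset.sum_eq_zero (hA0 i hi), add_zero]
  have hcolS : ∑ j ∈ S', ∑ i ∈ I', A i j + ∑ j ∈ S', ∑ i ∈ I'ᶜ, A i j =
      ∑ j ∈ S', ∑ i ∈ I', B i j := by
    rw [← Finset.sum_add_distrib]
    refine Finset.sum_congr rfl fun j hj ↦ ?_
    rw [Finset.sum_add_sum_compl, hcol, ← Finset.sum_add_sum_compl I',
      Finset.sum_eq_zero (hB0 j hj), add_zero]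
  -- `hrowI` and `hcolS` say that the masses of `A` on `Iᶜ × S` and of `B` on `I × Sᶜ` add up to 0.
  rw [Finset.sum_comm (s := S'), Finset.sum_comm (s := S') (t := I')] at hcolS
  have hYA := Finset.sum_nonneg fun j (_ : j ∈ S') ↦
    Finset.sum_nonneg fun i (_ : i ∈ I'ᶜ) ↦ hA i j
  have hYB := Finset.sum_nonneg fun i (_ : i ∈ I') ↦
    Finset.sum_nonneg fun j (_ : j ∈ S'ᶜ) ↦ hB i j
  refine ⟨fun i hi j hBij ↦ ?_, fun j hj i hAij ↦ ?_⟩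
  · by_contra hj
    have := single_le_sum_sum_of_nonneg hB (I := I') (S := S'ᶜ) (by simpa [I'] using hi)
      (by simpa [S'] using hj)
    linarith
  · by_contra hi
    have := single_le_sum_sum_of_nonneg (fun j i ↦ hA i j) (I := S') (S := I'ᶜ)
      (by simpa [S'] using hj) (by simpa [I'] using hi)
    linarith

end Margins

namespace IsCoupling

variable {lam mu : Measure (Sph m)} {pl : Measure (Sph m × Sph m)}
  {ι κ : Type*} [Fintype ι] [Fintype κ]

lemma measure_fst_preimage (hpl : IsCoupling lam mu pl) {s : Set (Sph m)}
    (hs : MeasurableSet s) : pl (Prod.fst ⁻¹' s) = lam s := by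
  rw [← hpl.2.1, Measure.map_apply measurable_fst hs]

lemma measure_snd_preimage (hpl : IsCoupling lam mu pl) {t : Set (Sph m)}
    (hs : MeasurableSet t) : pl (Prod.snd ⁻¹' t) = mu t := by
  rw [← hpl.2.2, Measure.map_apply measurable_snd hs]

lemma sum_measure_prod_left [IsProbabilityMeasure lam] (hpl : IsCoupling lam mu pl)
    {P : ι → Set (Sph m)} (hPm : ∀ i, MeasurableSet (P i))
    (hPd : Pairwise (Function.onFun Disjoint P)) (hPU : lam (⋃ i, P i) = 1)
    {t : Set (Sph m)} (ht : MeasurableSet t) : ∑ i, pl (P i ×ˢ t) = mu t := by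
  have hnull : pl (Prod.fst ⁻¹' (⋃ i, P i))ᶜ = 0 := by
    rw [← preimage_compl, hpl.measure_fst_preimage (MeasurableSet.iUnion hPm).compl,
      prob_compl_eq_zero_iff (MeasurableSet.iUnion hPm)]
    exact hPU
  have hunion := measure_iUnion (μ := pl) (fun i j hij ↦ (hPd hij).set_prod_left t t)
    (fun i ↦ (hPm i).prod ht)
  rw [tsum_fintype] at hunion
  rw [← hunion, ← iUnion_prod_const, prod_eq, inter_comm,
    measure_inter_conull hnull, hpl.measure_snd_preimage ht]

lemma sum_measure_prod_right [IsProbabilityMeasure mu] (hpl : IsCoupling lam mu pl)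
    {Q : κ → Set (Sph m)} (hQm : ∀ j, MeasurableSet (Q j))
    (hQd : Pairwise (Function.onFun Disjoint Q)) (hQU : mu (⋃ j, Q j) = 1)
    {s : Set (Sph m)} (hs : MeasurableSet s) : ∑ j, pl (s ×ˢ Q j) = lam s := by
  have hnull : pl (Prod.snd ⁻¹' (⋃ j, Q j))ᶜ = 0 := by
    rw [← preimage_compl, hpl.measure_snd_preimage (MeasurableSet.iUnion hQm).compl,
      prob_compl_eq_zero_iff (MeasurableSet.iUnion hQm)]
    exact hQU
  have hunion := measure_iUnion (μ := pl) (fun i j hij ↦ (hQd hij).set_prod_right s s)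
    (fun j ↦ hs.prod (hQm j))
  rw [tsum_fintype] at hunion
  rw [← hunion, ← prod_iUnion, prod_eq, measure_inter_conull hnull,
    hpl.measure_fst_preimage hs]

theorem closed_cells [IsProbabilityMeasure lam] [IsProbabilityMeasure mu]
    {P : ι → Set (Sph m)} {Q : κ → Set (Sph m)} {po pa : Measure (Sph m × Sph m)}
    (hpo : IsCoupling lam mu po) (hpa : IsCoupling lam mu pa) (hPm : ∀ i, MeasurableSet (P i))
    (hQm : ∀ j, MeasurableSet (Q j)) (hPd : Pairwise (Function.onFun Disjoint P))
    (hQd : Pairwise (Function.onFun Disjoint Q)) (hPU : lam (⋃ i, P i) = 1)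
    (hQU : mu (⋃ j, Q j) = 1) {I : Set ι} {S : Set κ}
    (hI : ∀ i ∈ I, ∀ j, 0 < po (P i ×ˢ Q j) → j ∈ S)
    (hS : ∀ j ∈ S, ∀ i, 0 < pa (P i ×ˢ Q j) → i ∈ I) :
    (∀ i ∈ I, ∀ j, 0 < pa (P i ×ˢ Q j) → j ∈ S) ∧
      (∀ j ∈ S, ∀ i, 0 < po (P i ×ˢ Q j) → i ∈ I) := by
  have hpos : ∀ pl : Measure (Sph m × Sph m), IsCoupling lam mu pl → ∀ i j,
      0 < (pl (P i ×ˢ Q j)).toReal ↔ 0 < pl (P i ×ˢ Q j) := fun pl hpl i j ↦ by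
    have := hpl.1
    simp [ENNReal.toReal_pos_iff, measure_lt_top]
  have hrow : ∀ pl : Measure (Sph m × Sph m), IsCoupling lam mu pl → ∀ i,
      ∑ j, (pl (P i ×ˢ Q j)).toReal = (lam (P i)).toReal := fun pl hpl i ↦ by
    have := hpl.1
    rw [← ENNReal.toReal_sum fun j _ ↦ measure_ne_top _ _,
      hpl.sum_measure_prod_right hQm hQd hQU (hPm i)]
  have hcol : ∀ pl : Measure (Sph m × Sph m), IsCoupling lam mu pl → ∀ j,
      ∑ i, (pl (P i ×ˢ Q j)).toReal = (mu (Q j)).toReal := fun pl hpl j ↦ by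
    have := hpl.1
    rw [← ENNReal.toReal_sum fun i _ ↦ measure_ne_top _ _,
      hpl.sum_measure_prod_left hPm hPd hPU (hQm j)]
  simpa only [hpos pa hpa, hpos po hpo] using
    closed_of_eq_margins (fun _ _ ↦ ENNReal.toReal_nonneg) (fun _ _ ↦ ENNReal.toReal_nonneg)
      (fun i ↦ (hrow po hpo i).trans (hrow pa hpa i).symm)
      (fun j ↦ (hcol po hpo j).trans (hcol pa hpa j).symm)
      (by simpa only [hpos po hpo] using hI) (by simpa only [hpos pa hpa] using hS)

end IsCoupling

section Walks

variable {V : Type*} {r : V → V → Prop} {G : Set V}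

variable (r G) in
def IsWalkIn (k : ℕ) (f : ℕ → V) : Prop :=
  (∀ s ≤ k, f s ∈ G) ∧ ∀ s < k, r (f s) (f (s + 1))

variable (r G) in
def WalkReach (a b : V) : Prop :=
  ∃ k f, f 0 = a ∧ f k = b ∧ IsWalkIn r G k f

lemma WalkReach.refl {a : V} (ha : a ∈ G) : WalkReach r G a a :=
  ⟨0, fun _ ↦ a, rfl, rfl, fun _ _ ↦ ha, fun _ h ↦ absurd h (Nat.not_lt_zero _)⟩

lemma WalkReach.tail {a b c : V} (h : WalkReach r G a b) (hc : c ∈ G) (hbc : r b c) :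
    WalkReach r G a c := by
  obtain ⟨k, f, h0, hk, hmem, hstep⟩ := h
  refine ⟨k + 1, fun s ↦ if s ≤ k then f s else c, by simp [h0], by simp, fun s hs ↦ ?_,
    fun s hs ↦ ?_⟩
  · dsimp only
    split_ifs with h
    exacts [hmem s h, hc]
  · rcases Nat.lt_succ_iff_lt_or_eq.mp hs with hs | rfl
    · simpa [hs.le, Nat.succ_le_of_lt hs] using hstep s hs
    · simpa [hk] using hbc

lemma IsWalkIn.exists_cut {k s d : ℕ} {f : ℕ → V} (hf : IsWalkIn r G k f) (hsd : s + d ≤ k)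
    (hloop : f s = f (s + d)) :
    ∃ g, g 0 = f 0 ∧ g (k - d) = f k ∧ IsWalkIn r G (k - d) g := by
  refine ⟨fun i ↦ if i ≤ s then f i else f (i + d), by simp, ?_, fun i hi ↦ ?_, fun i hi ↦ ?_⟩
  · dsimp only
    split_ifs with h
    · rw [show k - d = s by omega, hloop, show s + d = k by omega]
    · rw [Nat.sub_add_cancel (by omega)]
  · dsimp only
    split_ifs
    exacts [hf.1 i (by omega), hf.1 _ (by omega)]
  · rcases lt_trichotomy (i + 1) (s + 1) with h | h | h
    · simpa [show i ≤ s by omega, show i + 1 ≤ s by omega] using hf.2 i (by omega)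
    · obtain rfl : i = s := by omega
      simpa [hloop, add_right_comm] using hf.2 (i + d) (by omega)
    · simpa [show ¬i ≤ s by omega, show ¬i + 1 ≤ s by omega, add_right_comm]
        using hf.2 (i + d) (by omega)

theorem WalkReach.exists_le_ncard (hG : G.Finite) {a b : V} (h : WalkReach r G a b) :
    ∃ k f, k ≤ G.ncard ∧ f 0 = a ∧ f k = b ∧ IsWalkIn r G k f := by
  obtain ⟨k, f, h0, hk, hf⟩ := h
  induction k using Nat.strong_induction_on generalizing f with
  | _ k ih =>
    by_cases hkG : k ≤ G.ncard
    · exact ⟨k, f, hkG, h0, hk, hf⟩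
    have hcut : ∀ s t, s < t → t ≤ k → f s = f t →
        ∃ k f, k ≤ G.ncard ∧ f 0 = a ∧ f k = b ∧ IsWalkIn r G k f := by
      intro s t hst htk hloop
      obtain ⟨g, hg0, hgk, hg⟩ := hf.exists_cut (s := s) (d := t - s) (by omega)
        (by rwa [Nat.add_sub_cancel' hst.le])
      exact ih (k - (t - s)) (by omega) g (hg0.trans h0) (hgk.trans hk) hg
    have hcard : G.ncard < (Finset.range (k + 1) : Set ℕ).ncard := by
      rw [Set.ncard_coe_finset, Finset.card_range]
      omega
    obtain ⟨s, hs, t, ht, hne, hloop⟩ := Set.exists_ne_map_eq_of_ncard_lt_of_maps_to hcard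
      (fun s hs ↦ hf.1 s (Nat.lt_succ_iff.mp (by simpa using hs))) hG
    simp only [Finset.coe_range, Set.mem_Iio] at hs ht
    rcases hne.lt_or_gt with hlt | hlt
    exacts [hcut s t hlt (by omega) hloop, hcut t s hlt (by omega) hloop.symm]

end Walks

lemma IsSphChainComponent.mem_iff {A C N : Set (Sph m)} {κ : ℝ}
    (hC : IsSphChainComponent A κ C) (hN : ∀ a b, a ∈ N → b ∈ A → sphDist a b < κ → b ∈ N)
    {y y' : Sph m} (hy : y ∈ C) (hy' : y' ∈ C) : y ∈ N ↔ y' ∈ N := by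
  obtain ⟨x, -, rfl⟩ := hC
  exact (SphChainIn.mem_iff hN hy).symm.trans (SphChainIn.mem_iff hN hy')

lemma exists_measure_inter_pos {X ι : Type*} [MeasurableSpace X] [Countable ι] {μ : Measure X}
    {Q : ι → Set X} (hQ : μ (⋃ j, Q j)ᶜ = 0) {t : Set X} (ht : 0 < μ t) :
    ∃ j, 0 < μ (Q j ∩ t) := by
  by_contra! h
  refine ht.ne' ?_
  rw [← measure_inter_conull hQ, inter_iUnion]
  exact measure_iUnion_null fun j ↦ by simpa [inter_comm] using h j

lemma sphDist_lt_of_measure_prod_pos {α : ℝ} (hα : α ∈ Ioo 0 (π / 2))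
    {pa : Measure (Sph m × Sph m)}
    (hpa : msupport pa ⊆ {q | cos (π / 2 - α) ≤ ⟪(q.1 : Euc m), (q.2 : Euc m)⟫})
    {s t : Set (Sph m)} {z w : Sph m} (hs : ∀ n ∈ s, sphDist z n < α / 8)
    (ht : ∀ x ∈ t, sphDist x w ≤ 5 * α / 8) (hpos : 0 < pa (s ×ˢ t)) :
    sphDist z w < π / 2 - α / 4 := by
  obtain ⟨⟨n, x⟩, ⟨hn, hx⟩, hnx⟩ := Measure.nonempty_inter_support_of_pos hpos
  rw [← msupport_eq_support] at hnx
  have hd : sphDist n x ≤ π / 2 - α :=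
    sphDist_le_of_cos_le_inner (by linarith [hα.2]) (by linarith [hα.1, pi_pos]) (hpa hnx)
  linarith [sphDist_triangle z n w, sphDist_triangle n x w, hs n hn, ht x hx]

section Cells

variable {ι κ : Type*}

def cellEdge (z : ι → Sph m) (w : κ → Sph m) (α : ℝ) (a b : ι × κ) : Prop :=
  sphDist (z b.1) (w a.2) < π / 2 - α / 4

def nearRows (z : ι → Sph m) (w : κ → Sph m) (α : ℝ) (S : Set κ) : Set ι :=
  {i | ∃ j ∈ S, sphDist (z i) (w j) < π / 2 - α / 4}

variable [Fintype ι] {lam mu : Measure (Sph m)} [IsProbabilityMeasure lam]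
  {pa : Measure (Sph m × Sph m)} {P : ι → Set (Sph m)} {Q : κ → Set (Sph m)}
  {z : ι → Sph m} {w : κ → Sph m} {α : ℝ} {S : Set κ}

lemma mem_of_measure_inter_pos (hpa : IsCoupling lam mu pa) (hPm : ∀ i, MeasurableSet (P i))
    (hQm : ∀ j, MeasurableSet (Q j)) (hPd : Pairwise (Function.onFun Disjoint P))
    (hPU : lam (⋃ i, P i) = 1) (hα : α ∈ Ioo 0 (π / 2))
    (hpasupp : msupport pa ⊆ {q | cos (π / 2 - α) ≤ ⟪(q.1 : Euc m), (q.2 : Euc m)⟫})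
    (hPz : ∀ i, ∀ n ∈ P i, sphDist (z i) n < α / 8)
    (hS : ∀ i ∈ nearRows z w α S, ∀ j, 0 < pa (P i ×ˢ Q j) → j ∈ S)
    {j₀ j : κ} (hj₀ : j₀ ∈ S) {t : Set (Sph m)} (ht : MeasurableSet t)
    (htw : ∀ x ∈ t, sphDist x (w j₀) ≤ 5 * α / 8) (hpos : 0 < mu (Q j ∩ t)) : j ∈ S := by
  rw [← hpa.sum_measure_prod_left hPm hPd hPU ((hQm j).inter ht)] at hpos
  obtain ⟨i, -, hi⟩ := Finset.sum_pos_iff.1 hpos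
  refine hS i ⟨j₀, hj₀, ?_⟩ j (hi.trans_le (measure_mono (prod_mono_right inter_subset_left)))
  exact sphDist_lt_of_measure_prod_pos hα hpasupp (hPz i) (fun x hx ↦ htw x hx.2) hi

theorem mem_of_mem_sphChainComponent [Countable κ] [IsProbabilityMeasure mu]
    (hpa : IsCoupling lam mu pa)
    (hPm : ∀ i, MeasurableSet (P i)) (hQm : ∀ j, MeasurableSet (Q j))
    (hPd : Pairwise (Function.onFun Disjoint P)) (hPU : lam (⋃ i, P i) = 1)
    (hQU : mu (⋃ j, Q j) = 1) (hα : α ∈ Ioo 0 (π / 2))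
    (hpasupp : msupport pa ⊆ {q | cos (π / 2 - α) ≤ ⟪(q.1 : Euc m), (q.2 : Euc m)⟫})
    (hPz : ∀ i, ∀ n ∈ P i, sphDist (z i) n < α / 8)
    (hQw : ∀ j, ∀ x ∈ Q j, sphDist x (w j) < α / 8)
    (hS : ∀ i ∈ nearRows z w α S, ∀ j, 0 < pa (P i ×ˢ Q j) → j ∈ S)
    {C : Set (Sph m)} (hC : IsSphChainComponent (msupport mu) (α / 4) C) {j₀ j₁ : κ}
    (hj₀ : j₀ ∈ S) {y y' : Sph m} (hy : y ∈ Q j₀ ∩ C) (hy' : y' ∈ Q j₁ ∩ C)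
    (hj₁ : 0 < mu (Q j₁)) : j₁ ∈ S := by
  have hmem := fun {j₀ j} (hj₀ : j₀ ∈ S) {t} ↦
    mem_of_measure_inter_pos (j := j) hpa hPm hQm hPd hPU hα hpasupp hPz hS hj₀ (t := t)
  have hQnull : mu (⋃ j, Q j)ᶜ = 0 := (prob_compl_eq_zero_iff (.iUnion hQm)).2 hQU
  -- `5α/32 = α/8 + α/32` (cell radius plus ball radius), and `5α/32 + α/4 + α/32 ≤ 5α/8`.
  set N : Set (Sph m) := {y | ∃ j ∈ S, sphDist y (w j) < 5 * α / 32}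
  have hstable : ∀ a b, a ∈ N → b ∈ msupport mu → sphDist a b < α / 4 → b ∈ N := by
    rintro a b ⟨j, hj, haj⟩ hb hab
    have hball := isOpen_setOf_sphDist_lt b (α / 32)
    obtain ⟨j₂, hj₂⟩ := exists_measure_inter_pos hQnull
      (hb _ (hball.mem_nhds (by simp [sphDist_self, hα.1])))
    obtain ⟨x, hxQ, hxb⟩ := nonempty_of_measure_ne_zero hj₂.ne'
    replace hxb : sphDist b x < α / 32 := hxb
    refine ⟨j₂, hmem hj hball.measurableSet (fun x' (hx' : sphDist b x' < α / 32) ↦ ?_) hj₂,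
      by linarith [sphDist_triangle b x (w j₂), hQw j₂ x hxQ]⟩
    linarith [sphDist_triangle x' b (w j), sphDist_triangle b a (w j), sphDist_comm x' b,
      sphDist_comm b a, hα.1]
  obtain ⟨j, hj, hy'j⟩ := (hC.mem_iff hstable hy.2 hy'.2).1
    ⟨j₀, hj₀, (hQw j₀ y hy.1).trans (by linarith [hα.1])⟩
  refine hmem hj (hQm j₁) (fun x hx ↦ ?_) (by rwa [inter_self])
  linarith [sphDist_triangle x (w j₁) y', sphDist_triangle x y' (w j), hQw j₁ x hx,
    hQw j₁ y' hy'.1, sphDist_comm (w j₁) y', hα.1]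

end Cells

theorem stmt_8_general (m : ℕ) (lam mu : Measure (Sph m))
    [IsProbabilityMeasure lam] [IsProbabilityMeasure mu]
    (α : ℝ) (hα : α ∈ Set.Ioo 0 (π / 2))
    (po pa : Measure (Sph m × Sph m))
    (hpo : IsCoupling lam mu po)
    (hpa : IsCoupling lam mu pa)
    (hpasupp : msupport pa ⊆
      {q : Sph m × Sph m | Real.cos (π / 2 - α) ≤ ⟪(q.1 : Euc m), (q.2 : Euc m)⟫})
    (l p : ℕ)
    (P : Fin l → Set (Sph m)) (Q : Fin p → Set (Sph m))
    (hPm : ∀ i, MeasurableSet (P i)) (hQm : ∀ j, MeasurableSet (Q j))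
    (hPd : Pairwise (Function.onFun Disjoint P)) (hQd : Pairwise (Function.onFun Disjoint Q))
    (hPU : lam (⋃ i, P i) = 1) (hQU : mu (⋃ j, Q j) = 1)
    (hQpos : ∀ j, 0 < mu (Q j))
    (hPdiam : ∀ i, sphDiam (P i) < α / 8) (hQdiam : ∀ j, sphDiam (Q j) < α / 8)
    (z : Fin l → Sph m) (w : Fin p → Sph m)
    (hz : ∀ i, z i ∈ interior (P i) ∩ msupport lam)
    (hw : ∀ j, w j ∈ interior (Q j) ∩ msupport mu)
    (G : Set (Fin l × Fin p)) (hG : G = {v : Fin l × Fin p | 0 < po (P v.1 ×ˢ Q v.2)})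
    (C : Set (Sph m)) (hC : IsSphChainComponent (msupport mu) (α / 4) C)
    (GC : Set (Fin l × Fin p)) (hGC : GC = {v ∈ G | (Q v.2 ∩ C).Nonempty}) :
    ∀ v ∈ GC, ∀ v' ∈ GC, ∃ (k : ℕ) (f : ℕ → Fin l × Fin p),
      k ≤ G.ncard ∧ f 0 = v ∧ f k = v' ∧ (∀ s ≤ k, f s ∈ G) ∧
      ∀ s < k, sphDist (z (f (s + 1)).1) (w (f s).2) < π / 2 - α / 4 := by
  subst hGC
  rintro v ⟨hvG, y, hy⟩ v' ⟨hv'G, y', hy'⟩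
  have hPz : ∀ i, ∀ n ∈ P i, sphDist (z i) n < α / 8 := fun i n hn ↦
    (sphDist_le_sphDiam (interior_subset (hz i).1) hn).trans_lt (hPdiam i)
  have hQw : ∀ j, ∀ x ∈ Q j, sphDist x (w j) < α / 8 := fun j x hx ↦
    (sphDist_le_sphDiam hx (interior_subset (hw j).1)).trans_lt (hQdiam j)
  set S : Set (Fin p) := {j | ∃ i, WalkReach (cellEdge z w α) G v (i, j)}
  have hSpo : ∀ i ∈ nearRows z w α S, ∀ j, 0 < po (P i ×ˢ Q j) → j ∈ S := by
    rintro i ⟨j₀, ⟨i₀, hreach⟩, hd⟩ j hpos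
    exact ⟨i, hreach.tail (hG ▸ hpos) hd⟩
  have hSpa : ∀ j ∈ S, ∀ i, 0 < pa (P i ×ˢ Q j) → i ∈ nearRows z w α S := fun j hj i hpos ↦
    ⟨j, hj, sphDist_lt_of_measure_prod_pos hα hpasupp (hPz i)
      (fun x hx ↦ by linarith [hQw j x hx, hα.1]) hpos⟩
  obtain ⟨hpaS, hpoS⟩ := hpo.closed_cells hpa hPm hQm hPd hQd hPU hQU hSpo hSpa
  have hv'S : v'.2 ∈ S := mem_of_mem_sphChainComponent hpa hPm hQm hPd hPU hQU hα hpasupp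
    hPz hQw hpaS hC ⟨v.1, WalkReach.refl hvG⟩ hy hy' (hQpos v'.2)
  obtain ⟨j, ⟨i, hreach⟩, hd⟩ := hpoS _ hv'S _ (hG ▸ hv'G)
  obtain ⟨k, f, hk, hf0, hfk, hf⟩ := (hreach.tail hv'G hd).exists_le_ncard G.toFinite
  exact ⟨k, f, hk, hf0, hfk, hf⟩

/-- Proposition 4.8: connectivity of the subgraph `𝔊_C` of the
discretised graph by paths of enlarged edges, of length at most `#𝔊`. -/
theorem stmt_8 (m : ℕ) (lam mu : Measure (Sph m))
    [IsProbabilityMeasure lam] [IsProbabilityMeasure mu]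
    (α : ℝ) (hα : α ∈ Set.Ioo 0 (π / 2)) (hWA : WeakAleksandrov lam mu α)
    (hac : lam ≪ unifSph m) (hsupp : NotInClosedHemisphere mu)
    (po pa : Measure (Sph m × Sph m))
    (hpo : IsCoupling lam mu po)
    (hpomin : ∀ pl, IsCoupling lam mu pl → transportCost po ≤ transportCost pl)
    (hpa : IsCoupling lam mu pa)
    (hpasupp : msupport pa ⊆
      {q : Sph m × Sph m | Real.cos (π / 2 - α) ≤ ⟪(q.1 : Euc m), (q.2 : Euc m)⟫})
    (l p : ℕ) (hl : 1 ≤ l) (hp : 1 ≤ p)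
    (P : Fin l → Set (Sph m)) (Q : Fin p → Set (Sph m))
    (hPm : ∀ i, MeasurableSet (P i)) (hQm : ∀ j, MeasurableSet (Q j))
    (hPd : Pairwise (Function.onFun Disjoint P)) (hQd : Pairwise (Function.onFun Disjoint Q))
    (hPU : lam (⋃ i, P i) = 1) (hQU : mu (⋃ j, Q j) = 1)
    (hPpos : ∀ i, 0 < lam (P i)) (hQpos : ∀ j, 0 < mu (Q j))
    (hPfr : ∀ i, lam (frontier (P i)) = 0) (hQfr : ∀ j, mu (frontier (Q j)) = 0)
    (hPdiam : ∀ i, sphDiam (P i) < α / 8) (hQdiam : ∀ j, sphDiam (Q j) < α / 8)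
    (z : Fin l → Sph m) (w : Fin p → Sph m)
    (hz : ∀ i, z i ∈ interior (P i) ∩ msupport lam)
    (hw : ∀ j, w j ∈ interior (Q j) ∩ msupport mu)
    (G : Set (Fin l × Fin p)) (hG : G = {v : Fin l × Fin p | 0 < po (P v.1 ×ˢ Q v.2)})
    (C : Set (Sph m)) (hC : IsSphChainComponent (msupport mu) (α / 4) C)
    (GC : Set (Fin l × Fin p)) (hGC : GC = {v ∈ G | (Q v.2 ∩ C).Nonempty}) :
    ∀ v ∈ GC, ∀ v' ∈ GC, ∃ (k : ℕ) (f : ℕ → Fin l × Fin p),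
      k ≤ G.ncard ∧ f 0 = v ∧ f k = v' ∧ (∀ s ≤ k, f s ∈ G) ∧
      ∀ s < k, sphDist (z (f (s + 1)).1) (w (f s).2) < π / 2 - α / 4 :=
  stmt_8_general m lam mu α hα po pa hpo hpa hpasupp l p P Q hPm hQm hPd hQd hPU hQU hQpos hPdiam
    hQdiam z w hz hw G hG C hC GC hGC
end

section
/- Let ψ : S^m → ℝ ∪ {−∞} be bounded above and such that for every u ∈ S^m the open hemisphere B(u, π/2) = {x ∈ S^m : d(u,x) < π/2} contains a point where ψ > −∞. Then the c-transform ψ^c(n) = inf_{x ∈ S^m} (c(n,x) − ψ(x)) is real-valued and Lipschitz on S^m. -/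
open MeasureTheory Metric Set Real
open scoped RealInnerProductSpace ENNReal NNReal symmDiff

/-! Since the cost is nonnegative, `ψ^c ≥ -M` where `M` bounds `ψ`. Each `n` has a neighbourhood
inside the open hemisphere around some `x` with `ψ x` finite, so `ψ^c` is locally bounded above,
hence by compactness bounded above by some `C`. Then a point `x` with `⟨n, x⟩ ≤ ε := e^{-(C+M)}`
costs at least `C + M` and is irrelevant for the infimum near `n`, while for the remaining points
`-log ⟨·, x⟩` is `2/ε`-Lipschitz on the ball of radius `ε/2` around `n`. This local Lipschitz
bound together with the boundedness of `ψ^c` gives a global one. -/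

open Topology

theorem CompactSpace.exists_forall_le_of_locally_le {X α β : Type*} [TopologicalSpace X]
    [CompactSpace X] [Preorder α] [SemilatticeSup β] [Nonempty β] {f : X → α} {g : β → α}
    (hg : Monotone g)
    (h : ∀ x, ∃ U ∈ 𝓝 x, ∃ b, ∀ y ∈ U, f y ≤ g b) : ∃ b, ∀ y, f y ≤ g b := by
  have key : ∃ b, ∀ y ∈ (univ : Set X), f y ≤ g b := by
    refine isCompact_univ.induction_on (p := fun s => ∃ b, ∀ y ∈ s, f y ≤ g b)
      ⟨Classical.arbitrary β, by simp⟩ (fun s t hst ⟨b, hb⟩ => ⟨b, fun y hy => hb y (hst hy)⟩)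
      (fun s t ⟨b, hb⟩ ⟨b', hb'⟩ => ⟨b ⊔ b', ?_⟩) fun x _ => ?_
    · rintro y (hy | hy)
      · exact (hb y hy).trans (hg le_sup_left)
      · exact (hb' y hy).trans (hg le_sup_right)
    · obtain ⟨U, hU, hfU⟩ := h x
      exact ⟨U, mem_nhdsWithin_of_mem_nhds hU, hfU⟩
  simpa using key

theorem LipschitzWith.of_le_add_mul_of_dist_le {X : Type*} [PseudoMetricSpace X] {g : X → ℝ}
    {δ L D : ℝ} (hδ : 0 < δ) (hD : ∀ x y, g x ≤ g y + D)
    (hloc : ∀ x y, dist x y ≤ δ → g x ≤ g y + L * dist x y) :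
    LipschitzWith (max L (D / δ)).toNNReal g := by
  refine LipschitzWith.of_le_add_mul' _ fun x y => ?_
  rcases le_or_gt (dist x y) δ with hxy | hxy
  · exact (hloc x y hxy).trans (by gcongr; exact le_max_left _ _)
  · have hD0 : 0 ≤ D := by simpa using hD x x
    calc g x ≤ g y + D / δ * δ := by rw [div_mul_cancel₀ _ hδ.ne']; exact hD x y
      _ ≤ g y + max L (D / δ) * dist x y := by gcongr; exact le_max_right _ _

theorem Real.log_sub_log_le_of_sub_le {a b d δ : ℝ} (ha : 0 < a) (hδ : 0 < δ) (hb : δ ≤ b)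
    (hd : 0 ≤ d) (hab : a - b ≤ d) : log a - log b ≤ d / δ := by
  have hb0 : 0 < b := hδ.trans_le hb
  calc log a - log b = log (a / b) := (log_div ha.ne' hb0.ne').symm
    _ ≤ a / b - 1 := log_le_sub_one_of_pos (div_pos ha hb0)
    _ = (a - b) / b := by field_simp
    _ ≤ d / b := by gcongr
    _ ≤ d / δ := by gcongr

section SphereCost

variable {m : ℕ}

theorem inner_sub_inner_le_dist (n n' x : Sph m) :
    ⟪(n : Euc m), x⟫ - ⟪(n' : Euc m), x⟫ ≤ dist n n' := by
  rw [← inner_sub_left, Subtype.dist_eq, dist_eq_norm]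
  simpa using real_inner_le_norm ((n : Euc m) - n') x

theorem inner_le_one (n x : Sph m) : ⟪(n : Euc m), x⟫ ≤ 1 := by
  simpa using real_inner_le_norm (n : Euc m) x

theorem cE_of_inner_pos {n x : Sph m} (h : 0 < ⟪(n : Euc m), x⟫) :
    cE n x = ((-log ⟪(n : Euc m), x⟫ : ℝ) : EReal) := by
  have : 0 ≤ -log ⟪(n : Euc m), x⟫ := neg_nonneg.2 (log_nonpos h.le (inner_le_one n x))
  rw [cE, sphCost, if_pos h, EReal.coe_ennreal_ofReal, max_eq_left this]

theorem cE_le_neg_log {n x : Sph m} {δ : ℝ} (hδ : 0 < δ) (h : δ ≤ ⟪(n : Euc m), x⟫) :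
    cE n x ≤ ((-log δ : ℝ) : EReal) := by
  rw [cE_of_inner_pos (hδ.trans_le h), EReal.coe_le_coe_iff, neg_le_neg_iff]
  exact log_le_log hδ h

theorem le_cE_of_inner_le_exp_neg {n x : Sph m} {t : ℝ} (h : ⟪(n : Euc m), x⟫ ≤ exp (-t)) :
    (t : EReal) ≤ cE n x := by
  rcases le_or_gt ⟪(n : Euc m), x⟫ 0 with h0 | h0
  · simp [cE, sphCost, not_lt.2 h0]
  · rw [cE_of_inner_pos h0, EReal.coe_le_coe_iff, le_neg]
    simpa using log_le_log h0 h

theorem cE_le_cE_add {n n' x : Sph m} {δ : ℝ} (hδ : 0 < δ) (hn : 0 < ⟪(n : Euc m), x⟫)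
    (hn' : δ ≤ ⟪(n' : Euc m), x⟫) : cE n' x ≤ cE n x + ((dist n n' / δ : ℝ) : EReal) := by
  rw [cE_of_inner_pos hn, cE_of_inner_pos (hδ.trans_le hn'), ← EReal.coe_add,
    EReal.coe_le_coe_iff]
  linarith [Real.log_sub_log_le_of_sub_le hn hδ hn' dist_nonneg (inner_sub_inner_le_dist n n' x)]

end SphereCost

section CTransform

variable {m : ℕ} {ψ : Sph m → EReal} {M : ℝ}

theorem neg_le_ctrans (hM : ∀ x, ψ x ≤ M) (n : Sph m) : ((-M : ℝ) : EReal) ≤ ctrans ψ n :=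
  le_iInf fun x => by
    simpa [cE, sub_eq_add_neg] using
      EReal.sub_le_sub (EReal.coe_ennreal_nonneg (sphCost n x)) (hM x)

theorem exists_ctrans_le (hM : ∀ x, ψ x ≤ M)
    (hne : ∀ u : Sph m, ∃ x : Sph m, sphDist u x < π / 2 ∧ ψ x ≠ ⊥) :
    ∃ C : ℝ, ∀ n, ctrans ψ n ≤ C := by
  refine CompactSpace.exists_forall_le_of_locally_le EReal.coe_strictMono.monotone fun u => ?_
  obtain ⟨x, hux, hx⟩ := hne u
  have hpos : 0 < ⟪(u : Euc m), x⟫ := arccos_lt_pi_div_two.1 hux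
  obtain ⟨a, ha⟩ : ∃ a : ℝ, (a : EReal) = ψ x :=
    ⟨(ψ x).toReal, EReal.coe_toReal ((hM x).trans_lt (EReal.coe_lt_top M)).ne hx⟩
  refine ⟨ball u (⟪(u : Euc m), x⟫ / 2), ball_mem_nhds u (half_pos hpos),
    -log (⟪(u : Euc m), x⟫ / 2) - a, fun n hn => ?_⟩
  have hn : ⟪(u : Euc m), x⟫ / 2 ≤ ⟪(n : Euc m), x⟫ := by
    linarith [inner_sub_inner_le_dist u n x, mem_ball'.1 hn]
  calc ctrans ψ n ≤ cE n x - ψ x := iInf_le _ x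
    _ ≤ ((-log (⟪(u : Euc m), x⟫ / 2) : ℝ) : EReal) - ψ x :=
      EReal.sub_le_sub (cE_le_neg_log (half_pos hpos) hn) le_rfl
    _ = _ := by rw [← ha, ← EReal.coe_sub]

theorem ctrans_le_ctrans_add {C : ℝ} (hM : ∀ x, ψ x ≤ M) (hC : ∀ n, ctrans ψ n ≤ C)
    {n n' : Sph m} (hd : dist n n' ≤ exp (-(C + M)) / 2) :
    ctrans ψ n' ≤ ctrans ψ n + ((2 * exp (C + M) * dist n n' : ℝ) : EReal) := by
  set ε := exp (-(C + M)) with hε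
  have hε0 : 0 < ε := exp_pos _
  have hL : 2 * exp (C + M) * dist n n' = dist n n' / (ε / 2) := by
    rw [hε, exp_neg]; field_simp
  have hd0 : (0 : EReal) ≤ ((2 * exp (C + M) * dist n n' : ℝ) : EReal) :=
    EReal.coe_nonneg.2 (by positivity)
  have hc : ∀ a : EReal, ctrans ψ n' - ((2 * exp (C + M) * dist n n' : ℝ) : EReal) ≤ a ↔
      ctrans ψ n' ≤ a + ((2 * exp (C + M) * dist n n' : ℝ) : EReal) := fun a =>
    EReal.sub_le_iff_le_add (.inl (EReal.coe_ne_bot _)) (.inl (EReal.coe_ne_top _))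
  rw [← hc]
  refine le_iInf fun x => (hc _).2 ?_
  by_cases hx : ε < ⟪(n : Euc m), x⟫
  · have hn' : ε / 2 ≤ ⟪(n' : Euc m), x⟫ := by linarith [inner_sub_inner_le_dist n n' x]
    calc ctrans ψ n' ≤ cE n' x - ψ x := iInf_le _ x
      _ ≤ (cE n x + ((dist n n' / (ε / 2) : ℝ) : EReal)) - ψ x :=
        EReal.sub_le_sub (cE_le_cE_add (half_pos hε0) (hε0.trans hx) hn') le_rfl
      _ = cE n x - ψ x + ((2 * exp (C + M) * dist n n' : ℝ) : EReal) := by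
        rw [hL, sub_eq_add_neg, sub_eq_add_neg, add_right_comm]
  · have hcost := le_cE_of_inner_le_exp_neg (not_lt.1 hx)
    calc ctrans ψ n' ≤ C := hC n'
      _ = ((C + M : ℝ) : EReal) - M := by rw [← EReal.coe_sub, add_sub_cancel_right]
      _ ≤ cE n x - ψ x := EReal.sub_le_sub hcost (hM x)
      _ ≤ _ := le_add_of_nonneg_right hd0

end CTransform

/-- Proposition 5.4: if `ψ` is bounded above and not `−∞`
somewhere in every open hemisphere, then `ψ^c` is real-valued and Lipschitz. -/
theorem stmt_10 (m : ℕ) (ψ : Sph m → EReal)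
    (hbdd : ∃ M : ℝ, ∀ x : Sph m, ψ x ≤ (M : EReal))
    (hne : ∀ u : Sph m, ∃ x : Sph m, sphDist u x < π / 2 ∧ ψ x ≠ ⊥) :
    (∀ n : Sph m, ctrans ψ n ≠ ⊥ ∧ ctrans ψ n ≠ ⊤) ∧
    ∃ L : ℝ≥0, LipschitzWith L (fun n : Sph m => (ctrans ψ n).toReal) := by
  obtain ⟨M, hM⟩ := hbdd
  obtain ⟨C, hC⟩ := exists_ctrans_le hM hne
  have hfin : ∀ n, ctrans ψ n ≠ ⊥ ∧ ctrans ψ n ≠ ⊤ := fun n =>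
    ⟨ne_bot_of_le_ne_bot (EReal.coe_ne_bot _) (neg_le_ctrans hM n),
      ne_top_of_le_ne_top (EReal.coe_ne_top _) (hC n)⟩
  have hg : ∀ n, ((ctrans ψ n).toReal : EReal) = ctrans ψ n := fun n =>
    EReal.coe_toReal (hfin n).2 (hfin n).1
  refine ⟨hfin, _, LipschitzWith.of_le_add_mul_of_dist_le (L := 2 * exp (C + M)) (D := C + M)
    (half_pos (exp_pos (-(C + M)))) (fun n n' => ?_) (fun n n' hd => ?_)⟩
  · have hn := hC n
    have hn' := neg_le_ctrans hM n'
    rw [← hg] at hn hn'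
    linarith [EReal.coe_le_coe_iff.1 hn, EReal.coe_le_coe_iff.1 hn']
  · have h := ctrans_le_ctrans_add hM hC (dist_comm n n' ▸ hd)
    rwa [← hg n, ← hg n', ← EReal.coe_add, EReal.coe_le_coe_iff, dist_comm] at h
end

section
/- Let K ⊂ ℝ^{m+1} be a convex body with the origin in its interior, and let λ and μ be Borel probability measures on S^m such that K solves the Gauss image problem for (λ,μ). Then λ and μ satisfy the weak Aleksandrov condition: there exists α ∈ (0, π/2) such that μ(F) ≤ λ(F_{π/2−2α}) for every closed set F ⊆ S^m (in particular for every closed set F contained in a closed hemisphere). -/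
open MeasureTheory Metric Set Real
open scoped RealInnerProductSpace ENNReal NNReal symmDiff

/-!
The body contains a ball `closedBall 0 r` and lies in a ball `closedBall 0 R`. An outer
normal `n` at the boundary point `ρ_K(x) • x` supports the inner ball, so
`r ≤ ρ_K(x) ⟪x, n⟫ ≤ R ⟪x, n⟫`. Hence the Gauss image of `F` lies in `F_β` as soon as
`cos β < r / R`, and `β = π/2 - 2α` achieves this for small `α > 0`.
-/

section

variable {E : Type*} [NormedAddCommGroup E] [InnerProductSpace ℝ E]

theorem le_inner_of_forall_inner_sub_nonpos {K : Set E} {r : ℝ} {n p : E} (hn : ‖n‖ = 1)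
    (hr : 0 ≤ r) (hrK : closedBall 0 r ⊆ K) (hp : ∀ y ∈ K, ⟪y - p, n⟫ ≤ 0) :
    r ≤ ⟪p, n⟫ := by
  have hrn : r • n ∈ K := hrK (by simp [norm_smul, hn, abs_of_nonneg hr])
  have := hp _ hrn
  rw [inner_sub_left, real_inner_smul_left, real_inner_self_eq_norm_sq, hn] at this
  linarith

end

section

variable {m : ℕ}

theorem radialFn_nonneg (K : Set (Euc m)) (x : Sph m) : 0 ≤ radialFn K x :=
  Real.sSup_nonneg fun _ ht => ht.1.le

theorem radialFn_le {K : Set (Euc m)} {R : ℝ} (hKR : K ⊆ closedBall 0 R) (hR : 0 ≤ R)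
    (x : Sph m) : radialFn K x ≤ R := by
  refine Real.sSup_le (fun t ht => ?_) hR
  simpa [norm_smul, abs_of_pos ht.1] using hKR ht.2

theorem gaussImage_subset_sphExpand {K : Set (Euc m)} {r R β : ℝ} (hr : 0 < r)
    (hrK : closedBall 0 r ⊆ K) (hKR : K ⊆ closedBall 0 R) (hβ : cos β < r / R)
    (F : Set (Sph m)) : gaussImage K F ⊆ sphExpand F β := by
  rintro n ⟨x, hxF, hnormal⟩
  refine ⟨x, hxF, hβ.trans_le ?_⟩
  have hx : ‖(x : Euc m)‖ = 1 := by simp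
  have hrx : r • (x : Euc m) ∈ closedBall 0 r := by simp [norm_smul, hx, abs_of_pos hr]
  have hrR : r ≤ R := by simpa [norm_smul, hx, abs_of_pos hr] using hKR (hrK hrx)
  have hρ := radialFn_le hKR (hr.le.trans hrR) x
  have hsupp : r ≤ radialFn K x * ⟪(x : Euc m), n⟫ := by
    simpa [real_inner_smul_left] using
      le_inner_of_forall_inner_sub_nonpos (by simp) hr.le hrK hnormal
  have hpos : 0 < ⟪(x : Euc m), n⟫ := by
    by_contra! h
    nlinarith [mul_nonpos_of_nonneg_of_nonpos (radialFn_nonneg K x) h]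
  rw [div_le_iff₀ (hr.trans_le hrR), real_inner_comm]
  nlinarith

theorem exists_cos_pi_div_two_sub_two_mul_lt {c : ℝ} (hc : 0 < c) :
    ∃ α ∈ Ioo 0 (π / 2), cos (π / 2 - 2 * α) < c := by
  refine ⟨min c 1 / 4, ⟨by positivity, ?_⟩, ?_⟩
  · linarith [min_le_right c 1, pi_gt_three]
  · rw [cos_pi_div_two_sub]
    calc sin (2 * (min c 1 / 4)) ≤ 2 * (min c 1 / 4) := sin_le (by positivity)
      _ < c := by linarith [min_le_left c 1]

end

theorem stmt_12_general (m : ℕ) (K : Set (Euc m)) (hK : IsConvexBody K)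
    (lam mu : Measure (Sph m))
    (hsol : SolvesGIP K lam mu) :
    ∃ α ∈ Set.Ioo 0 (π / 2), ∀ F : Set (Sph m), IsClosed F →
      mu F ≤ lam (sphExpand F (π / 2 - 2 * α)) := by
  obtain ⟨hKc, -, hK0⟩ := hK
  obtain ⟨r, hr, hrK⟩ := nhds_basis_closedBall.mem_iff.1 (mem_interior_iff_mem_nhds.1 hK0)
  obtain ⟨R, hR, hKR⟩ := hKc.isBounded.subset_closedBall_lt 0 0
  obtain ⟨α, hα, hcos⟩ := exists_cos_pi_div_two_sub_two_mul_lt (div_pos hr hR)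
  refine ⟨α, hα, fun F hF => ?_⟩
  rw [hsol F hF.measurableSet]
  exact measure_mono (gaussImage_subset_sphExpand hr hrK hKR hcos F)

/-- the weak Aleksandrov condition is necessary for the Gauss
image problem to have a solution. -/
theorem stmt_12 (m : ℕ) (K : Set (Euc m)) (hK : IsConvexBody K)
    (lam mu : Measure (Sph m))
    [IsProbabilityMeasure lam] [IsProbabilityMeasure mu]
    (hsol : SolvesGIP K lam mu) :
    ∃ α ∈ Set.Ioo 0 (π / 2), ∀ F : Set (Sph m), IsClosed F →
      mu F ≤ lam (sphExpand F (π / 2 - 2 * α)) :=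
  stmt_12_general m K hK lam mu hsol
end
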